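/- Define R₁^γ(x) = K(x) - S(x), where K(x) = 2e^{x/2}(2 + eˣ(x-2) + x)/((eˣ-1)²x) and S(x) = -4eˣ(sinh x - x)/((e^{x/2}-1)²(e^{x/2}+1)²x). Then for all real x ≠ 0, R₁^γ(x) = (x + 2·sinh(x/2))/(x + x·cosh(x/2)) = (1/2 + sinh(x/2)/x)/cosh²(x/4). -/
import Mathlib


open Real

noncomputable def K (x : ℝ) : ℝ :=
  2 * Real.exp (x / 2) * (2 + Real.exp x * (x - 2) + x) / ((Real.exp x - 1) ^ 2 * x)

noncomputable def S (x : ℝ) : ℝ :=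
  -4 * Real.exp x * (Real.sinh x - x) /
    ((Real.exp (x / 2) - 1) ^ 2 * (Real.exp (x / 2) + 1) ^ 2 * x)

noncomputable def R₁γ (x : ℝ) : ℝ := K x - S x

theorem R_one_gamma_closed_form (x : ℝ) (hx : x ≠ 0) :
    R₁γ x = (x + 2 * Real.sinh (x / 2)) / (x + x * Real.cosh (x / 2)) ∧
    R₁γ x = (1 / 2 + Real.sinh (x / 2) / x) / Real.cosh (x / 4) ^ 2 := by
  have hu : Real.exp (x / 2) ≠ 1 := by
    rw [← Real.exp_zero]
    exact fun h => hx (by have := Real.exp_injective h; linarith)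
  have hu0 : Real.exp (x / 2) ≠ 0 := Real.exp_ne_zero _
  have hex : Real.exp x = Real.exp (x / 2) ^ 2 := by
    rw [← Real.exp_nat_mul]; ring_nf
  have hcosh : Real.cosh (x / 2) = (Real.exp (x / 2) ^ 2 + 1) / (2 * Real.exp (x / 2)) := by
    rw [Real.cosh_eq, Real.exp_neg]; field_simp
  have hsinh2 : Real.sinh (x / 2) = (Real.exp (x / 2) ^ 2 - 1) / (2 * Real.exp (x / 2)) := by
    rw [Real.sinh_eq, Real.exp_neg]; field_simp
  have hsinh : Real.sinh x = (Real.exp (x / 2) ^ 4 - 1) / (2 * Real.exp (x / 2) ^ 2) := by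
    rw [Real.sinh_eq, Real.exp_neg, hex]; field_simp
  have h1 : R₁γ x = (x + 2 * Real.sinh (x / 2)) / (x + x * Real.cosh (x / 2)) := by
    unfold R₁γ K S
    rw [hcosh, hsinh, hsinh2, hex]
    generalize hgen : Real.exp (x / 2) = u at hu hu0
    have hu1 : u - 1 ≠ 0 := sub_ne_zero.mpr hu
    have hu2 : u + 1 ≠ 0 := by
      have : (0 : ℝ) < u := hgen ▸ Real.exp_pos _
      positivity
    have hsq : u ^ 2 - 1 ≠ 0 := by
      have h : u ^ 2 - 1 = (u - 1) * (u + 1) := by ring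
      rw [h]; exact mul_ne_zero hu1 hu2
    have hrw : x + x * ((u ^ 2 + 1) / (2 * u)) = x * (u + 1) ^ 2 / (2 * u) := by
      field_simp; ring
    rw [hrw]
    field_simp [hx, hu0, hu1, hu2, hsq]
    ring
  refine ⟨h1, ?_⟩
  rw [h1]
  have hc4 : Real.cosh (x / 2) = 2 * Real.cosh (x / 4) ^ 2 - 1 := by
    have h : x / 2 = 2 * (x / 4) := by ring
    rw [h, Real.cosh_two_mul, Real.sinh_sq]; ring
  have hc4ne : Real.cosh (x / 4) ≠ 0 := ne_of_gt (Real.cosh_pos (x := x / 4))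
  rw [hc4]
  have hrw2 : x + x * (2 * Real.cosh (x / 4) ^ 2 - 1) = 2 * x * Real.cosh (x / 4) ^ 2 := by ring
  rw [hrw2]
  field_simp
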